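/- Let 1 ≤ k ≤ r < n and A = (a_{i+j-1}) an n×n Hankel matrix over a field F with A_k nonsingular, and let x = (x_1,...,x_k) solve A_k x^T = (a_{k+1},...,a_{2k})^T. Then A satisfies rank(A) ≤ r and A_d singular for all k < d ≤ n if and only if the relation a_{k+t} = x_1 a_t + ... + x_k a_{t+k-1} holds for all t = 1,...,2n-r-1. -/

import Mathlib

/-!
Let `δ t = a (k + t) - ∑ s, x s * a (t + s)` be the defect of the recurrence. Subtracting
`∑ s, x s • (row (u + s))` from row `u + k` of a Hankel matrix leaves the row `j ↦ δ (u + j + 1)`.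

If `δ` vanishes on `[1, 2n - r - 1]`, every row other than the first `k` and the last `r - k` is
thus a combination of earlier rows, so `rank A ≤ r`; and row `k` of each `A_d` (`d > k`) is a
combination of the rows above it, so `A_d` is singular.

Conversely, let `t₀` be the first index with `δ t₀ ≠ 0`. Suitable reduced rows, together with the
first `k` rows, contain a nonsingular block triangular minor whose diagonal blocks are `A_k` and an
anti-triangular block with `δ t₀` on its antidiagonal. For `t₀ ≤ n` this makes `A_{t₀}`
nonsingular, for `t₀ > n` it forces `rank A > r`.
-/

open Matrix

namespace Matrix

variable {F : Type*} [Field F]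

theorem rank_lt_card_of_det_eq_zero {m : Type*} [Fintype m] [DecidableEq m] {B : Matrix m m F}
    (h : B.det = 0) : B.rank < Fintype.card m := by
  obtain ⟨v, hv0, hv⟩ := exists_mulVec_eq_zero_iff.2 h
  have hker : Module.finrank F (LinearMap.ker B.mulVecLin) ≠ 0 :=
    fun h0 => hv0 ((Submodule.eq_bot_iff _).1 (Submodule.finrank_eq_zero.1 h0) v hv)
  have := LinearMap.finrank_range_add_finrank_ker B.mulVecLin
  rw [Module.finrank_fintype_fun_eq_card] at this
  rw [rank]
  omega

theorem rank_le_rank_of_row_mem_span {m m' n : Type*} [Fintype m] [Fintype m'] [Fintype n]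
    {R : Matrix m' n F} {B : Matrix m n F} (h : ∀ i, R i ∈ Submodule.span F (Set.range B.row)) :
    R.rank ≤ B.rank := by
  rw [rank_eq_finrank_span_row, rank_eq_finrank_span_row]
  exact Submodule.finrank_mono (Submodule.span_le.2 (Set.range_subset_iff.2 h))

theorem det_ne_zero_of_antitriangular {q : ℕ} {D : Matrix (Fin q) (Fin q) F}
    (hzero : ∀ i j : Fin q, (i : ℕ) + j + 1 < q → D i j = 0) (hanti : ∀ i, D i i.rev ≠ 0) :
    D.det ≠ 0 := by
  have htri : (D.submatrix id Fin.revPerm).IsLowerTriangular := by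
    intro i j hij
    have : (i : ℕ) < j := hij
    exact hzero _ _ (by simp only [id, Fin.revPerm_apply, Fin.val_rev]; omega)
  have hdet := det_of_isLowerTriangular _ htri
  rw [det_permute'] at hdet
  intro h
  rw [h, mul_zero, eq_comm] at hdet
  exact Finset.prod_ne_zero_iff.2 (fun i _ => hanti i) hdet

end Matrix

section Hankel

variable {F : Type*} [Field F] {k : ℕ}

def hankel (a : ℕ → F) (m : ℕ) : Matrix (Fin m) (Fin m) F := of fun i j => a (i + j + 1)

def recurrenceDefect (a : ℕ → F) (x : Fin k → F) (t : ℕ) : F :=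
  a (k + t) - ∑ s : Fin k, x s * a (t + s)

variable {a : ℕ → F} {x : Fin k → F}

theorem recurrenceDefect_eq_zero_iff {t : ℕ} :
    recurrenceDefect a x t = 0 ↔ a (k + t) = ∑ s : Fin k, x s * a (t + s) :=
  sub_eq_zero

theorem hankel_sub_sum_smul {m u : ℕ} (hu : u + k < m) :
    hankel a m ⟨u + k, hu⟩ - ∑ s : Fin k, x s • hankel a m ⟨u + s, by omega⟩ =
      fun j : Fin m => recurrenceDefect a x (u + j + 1) := by
  funext j
  simp only [Pi.sub_apply, Finset.sum_apply, Pi.smul_apply, smul_eq_mul, hankel, of_apply,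
    recurrenceDefect]
  congr 1
  · congr 1; omega
  · exact Finset.sum_congr rfl fun s _ => by congr 2; omega

theorem det_hankel_eq_zero {d : ℕ} (hkd : k < d)
    (hdef : ∀ t, 1 ≤ t → t ≤ d → recurrenceDefect a x t = 0) : (hankel a d).det = 0 := by
  classical
  refine exists_vecMul_eq_zero_iff.1 ⟨Pi.single ⟨k, hkd⟩ 1 -
    ∑ s : Fin k, x s • Pi.single ⟨s, by omega⟩ 1, fun h => ?_, ?_⟩
  · have hs : ∀ s : Fin k, (Pi.single (⟨s, by omega⟩ : Fin d) (1 : F) : Fin d → F) ⟨k, hkd⟩ = 0 :=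
      fun s => Pi.single_eq_of_ne (Fin.ne_of_val_ne s.isLt.ne') _
    simpa [hs] using congrFun h ⟨k, hkd⟩
  · have hrow := hankel_sub_sum_smul (a := a) (x := x) (u := 0) (m := d) (by omega)
    simp only [zero_add] at hrow
    rw [sub_vecMul, sum_vecMul]
    simp only [smul_vecMul, single_one_vecMul, row_def, hrow]
    funext j
    exact hdef _ (by omega) (by omega)

theorem hankel_row_mem_span {m c : ℕ} {S : Submodule F (Fin m → F)}
    (hlow : ∀ i : Fin m, (i : ℕ) < k → hankel a m i ∈ S)
    (hhigh : ∀ i : Fin m, c ≤ (i : ℕ) → hankel a m i ∈ S)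
    (hdef : ∀ t, 1 ≤ t → t + k < c + m → recurrenceDefect a x t = 0) (i : Fin m) :
    hankel a m i ∈ S := by
  obtain ⟨i, hi⟩ := i
  induction i using Nat.strong_induction_on with
  | _ i ih =>
    by_cases hik : i < k
    · exact hlow _ hik
    by_cases hci : c ≤ i
    · exact hhigh _ hci
    obtain ⟨u, rfl⟩ : ∃ u, i = u + k := ⟨i - k, by omega⟩
    have hrow := hankel_sub_sum_smul (a := a) (x := x) hi
    have hdef0 : (fun j : Fin m => recurrenceDefect a x (u + j + 1)) = 0 :=
      funext fun j => hdef _ (by omega) (by omega)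
    rw [hdef0, sub_eq_zero] at hrow
    rw [hrow]
    exact sum_mem fun s _ => S.smul_mem _ (ih _ (by omega) _)

theorem rank_hankel_le {m r : ℕ} (hkr : k ≤ r) (hrm : r ≤ m)
    (hdef : ∀ t, 1 ≤ t → t ≤ 2 * m - r - 1 → recurrenceDefect a x t = 0) :
    (hankel a m).rank ≤ r := by
  let rows : Fin k ⊕ Fin (r - k) → Fin m :=
    Sum.elim (Fin.castLE (by omega)) fun l => ⟨m - r + k + l, by omega⟩
  have hspan : ∀ i,
      hankel a m i ∈ Submodule.span F (Set.range ((hankel a m).submatrix rows id).row) := by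
    refine hankel_row_mem_span (x := x) (c := m - r + k) (fun i hi => ?_) (fun i hi => ?_)
      fun t _ ht => hdef t (by omega) (by omega)
    · exact Submodule.subset_span ⟨Sum.inl ⟨i, hi⟩, rfl⟩
    · refine Submodule.subset_span ⟨Sum.inr ⟨i - (m - r + k), by omega⟩, ?_⟩
      exact congrArg (hankel a m) (Fin.ext (by simp only [rows, Sum.elim_inr]; omega))
  calc (hankel a m).rank ≤ ((hankel a m).submatrix rows id).rank :=
        rank_le_rank_of_row_mem_span hspan
    _ ≤ Fintype.card (Fin k ⊕ Fin (r - k)) := rank_le_card_height _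
    _ = r := by simp only [Fintype.card_sum, Fintype.card_fin]; omega

/-- The minor of the row-reduced matrix on rows `0, …, k - 1, u + k, …, u + k + q - 1` and columns
`0, …, k - 1, γ, …, γ + q - 1` is block triangular with diagonal blocks `A_k` and
`(δ (u + γ + l + l' + 1))_{l l'}`; the latter is anti-triangular because `u + γ + q = t₀`. -/
theorem le_rank_hankel {m q u γ t₀ : ℕ} (hAk : (hankel a k).det ≠ 0)
    (hzero : ∀ t, 1 ≤ t → t < t₀ → recurrenceDefect a x t = 0)
    (hne : recurrenceDefect a x t₀ ≠ 0) (hγ : k ≤ γ) (ht₀ : u + γ + q = t₀)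
    (hrows : u + k + q ≤ m) (hcols : γ + q ≤ m) : k + q ≤ (hankel a m).rank := by
  classical
  have hkm : k ≤ m := by omega
  let R : Matrix (Fin k ⊕ Fin q) (Fin m) F :=
    of <| Sum.elim (fun i => hankel a m (Fin.castLE hkm i))
      fun l j => recurrenceDefect a x (u + l + j + 1)
  have hR : R.rank ≤ (hankel a m).rank := by
    refine rank_le_rank_of_row_mem_span fun p => ?_
    rcases p with i | l
    · exact Submodule.subset_span ⟨_, rfl⟩
    · have hRl : R (Sum.inr l) = _ :=
        (hankel_sub_sum_smul (a := a) (x := x) (u := u + l) (m := m) (by omega)).symm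
      rw [hRl]
      exact sub_mem (Submodule.subset_span ⟨_, rfl⟩)
        (sum_mem fun s _ => Submodule.smul_mem _ _ (Submodule.subset_span ⟨_, rfl⟩))
  let cols : Fin k ⊕ Fin q → Fin m := Sum.elim (Fin.castLE hkm) fun l => ⟨γ + l, by omega⟩
  let M := R.submatrix id cols
  have hM : M.det ≠ 0 := by
    rw [← fromBlocks_toBlocks M]
    have h21 : M.toBlocks₂₁ = 0 := by
      ext l j
      show recurrenceDefect a x (u + l + j + 1) = 0
      exact hzero _ (by omega) (by omega)
    rw [h21, det_fromBlocks_zero₂₁]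
    refine mul_ne_zero hAk (det_ne_zero_of_antitriangular (fun l l' h => ?_) fun l => ?_)
    · show recurrenceDefect a x (u + l + (γ + l') + 1) = 0
      exact hzero _ (by omega) (by omega)
    · show recurrenceDefect a x (u + l + (γ + l.rev) + 1) ≠ 0
      rwa [Fin.val_rev, show u + l + (γ + (q - (l + 1))) + 1 = t₀ by omega]
  calc k + q = M.rank := by simp [rank_of_det_ne_zero hM]
    _ ≤ R.rank := rank_submatrix_le _ _ _
    _ ≤ _ := hR

theorem recurrenceDefect_eq_zero_of_rank_hankel_le {n r : ℕ} (hkr : k ≤ r)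
    (hAk : (hankel a k).det ≠ 0) (hx : ∀ t, 1 ≤ t → t ≤ k → recurrenceDefect a x t = 0)
    (hrank : (hankel a n).rank ≤ r) (hsing : ∀ d, k < d → d ≤ n → (hankel a d).det = 0) :
    ∀ t, 1 ≤ t → t ≤ 2 * n - r - 1 → recurrenceDefect a x t = 0 := by
  intro t
  induction t using Nat.strong_induction_on with
  | _ t ih =>
    intro ht1 ht
    by_cases htk : t ≤ k
    · exact hx t ht1 htk
    by_contra hne
    have hzero : ∀ t', 1 ≤ t' → t' < t → recurrenceDefect a x t' = 0 :=
      fun t' h1 h2 => ih t' h2 h1 (by omega)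
    rcases le_or_gt t n with htn | hnt
    · have hle := le_rank_hankel (m := t) (q := t - k) (u := 0) (γ := k) hAk hzero hne le_rfl
        (by omega) (by omega) (by omega)
      have hlt := rank_lt_card_of_det_eq_zero (hsing t (by omega) htn)
      simp only [Fintype.card_fin] at hlt
      omega
    · have hle := le_rank_hankel (m := n) (q := r + 1 - k) (u := t - n) (γ := n - (r + 1 - k))
        hAk hzero hne (by omega) (by omega) (by omega) (by omega)
      omega

end Hankel

theorem hankel_delta_rank_iff_general (F : Type*) [Field F] (n k r : ℕ)
    (hkr : k ≤ r) (hrn : r < n) (hk : k ≤ n) (a : ℕ → F)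
    (A : Matrix (Fin n) (Fin n) F)
    (hA : ∀ i j : Fin n, A i j = a ((i : ℕ) + (j : ℕ) + 1))
    (hAk : (A.submatrix (Fin.castLE hk) (Fin.castLE hk)).det ≠ 0)
    (x : Fin k → F)
    (hx : ∀ t : ℕ, 1 ≤ t → t ≤ k → a (k + t) = ∑ s : Fin k, x s * a (t + (s : ℕ))) :
    (A.rank ≤ r ∧ ∀ (d : ℕ) (hd : d ≤ n), k < d →
        (A.submatrix (Fin.castLE hd) (Fin.castLE hd)).det = 0)
      ↔ ∀ t : ℕ, 1 ≤ t → t ≤ 2 * n - r - 1 →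
          a (k + t) = ∑ s : Fin k, x s * a (t + (s : ℕ)) := by
  obtain rfl : A = hankel a n := Matrix.ext hA
  have hsub : ∀ d (hd : d ≤ n),
      (hankel a n).submatrix (Fin.castLE hd) (Fin.castLE hd) = hankel a d := fun _ _ => rfl
  simp only [hsub, ← recurrenceDefect_eq_zero_iff] at hAk hx ⊢
  constructor
  · rintro ⟨hrank, hsing⟩
    exact recurrenceDefect_eq_zero_of_rank_hankel_le hkr hAk hx hrank
      fun d hkd hd => hsing d hd hkd
  · intro hdef
    exact ⟨rank_hankel_le hkr hrn.le hdef, fun d hd hkd =>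
      det_hankel_eq_zero hkd fun t ht1 ht => hdef t ht1 (by omega)⟩

/-- Let `1 ≤ k ≤ r < n` and let `A` be an `n × n` Hankel matrix with `(i,j)` entry
`a_{i+j-1}` (1-based) such that the leading principal submatrix `A_k` is nonsingular, and
let `x = (x_1, ..., x_k)` solve `A_k xᵀ = (a_{k+1}, ..., a_{2k})ᵀ`.  Then `rank A ≤ r` and
`A_d` is singular for all `k < d ≤ n` iff the relation
`a_{k+t} = ∑_{s=1}^k x_s a_{t+s-1}` holds for all `t = 1, ..., 2n - r - 1`. -/
theorem hankel_delta_rank_iff (F : Type*) [Field F] (n k r : ℕ) (hk1 : 1 ≤ k)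
    (hkr : k ≤ r) (hrn : r < n) (hk : k ≤ n) (a : ℕ → F)
    (A : Matrix (Fin n) (Fin n) F)
    (hA : ∀ i j : Fin n, A i j = a ((i : ℕ) + (j : ℕ) + 1))
    (hAk : (A.submatrix (Fin.castLE hk) (Fin.castLE hk)).det ≠ 0)
    (x : Fin k → F)
    (hx : ∀ t : ℕ, 1 ≤ t → t ≤ k → a (k + t) = ∑ s : Fin k, x s * a (t + (s : ℕ))) :
    (A.rank ≤ r ∧ ∀ (d : ℕ) (hd : d ≤ n), k < d →
        (A.submatrix (Fin.castLE hd) (Fin.castLE hd)).det = 0)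
      ↔ ∀ t : ℕ, 1 ≤ t → t ≤ 2 * n - r - 1 →
          a (k + t) = ∑ s : Fin k, x s * a (t + (s : ℕ)) :=
  hankel_delta_rank_iff_general F n k r hkr hrn hk a A hA hAk x hx
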